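/- Fix real parameters r, c₃ and c ≥ 0, and set s = r·c₃. Assume s ≤ 0, c² = c₃², c² + r² ≤ 2/3, and H₊(z) ≤ 1+sz, H₋(z) ≤ 1−sz for all z ∈ [0,1]. Then F(z) ≤ F(0) for all z ∈ [0,1], and F(0) = (1/2)(1+√(r²+c²))log₂(1+√(r²+c²)) + (1/2)(1−√(r²+c²))log₂(1−√(r²+c²)). -/

import Mathlib

/-- `H₊(z) = √(c²(1−z²)+(r+c₃z)²)`. -/
noncomputable def Hp (r c₃ c z : ℝ) : ℝ := Real.sqrt (c^2*(1 - z^2) + (r + c₃*z)^2)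

/-- `H₋(z) = √(c²(1−z²)+(r−c₃z)²)`. -/
noncomputable def Hm (r c₃ c z : ℝ) : ℝ := Real.sqrt (c^2*(1 - z^2) + (r - c₃*z)^2)

/-- The one-variable function `F(z)` from the quantum discord of X-states. -/
noncomputable def F (r s c₃ c z : ℝ) : ℝ :=
  (1/4) * (1 + s*z + Hp r c₃ c z) * Real.logb 2 ((1 + s*z + Hp r c₃ c z) / (1 + s*z)) +
  (1/4) * (1 + s*z - Hp r c₃ c z) * Real.logb 2 ((1 + s*z - Hp r c₃ c z) / (1 + s*z)) +
  (1/4) * (1 - s*z + Hm r c₃ c z) * Real.logb 2 ((1 - s*z + Hm r c₃ c z) / (1 - s*z)) +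
  (1/4) * (1 - s*z - Hm r c₃ c z) * Real.logb 2 ((1 - s*z - Hm r c₃ c z) / (1 - s*z))

/-!
For `c² = c₃²` one has `H₊(z)² = k + 2t` and `H₋(z)² = k − 2t` with `k = r² + c²`, `t = r c₃ z`,
so `F(z) = (G(t) + G(−t)) / (4 log 2)` for `G = mulLogGap k`.
For `k < 1`, `G` is concave on `[−k/2, ∞)`: writing `a = 1 + w`, `S = √(k + 2w)`, the only
transcendental term of `G''` is `−log((a + S)/(a − S)) / S³`, and the bound
`log((1 + x)/(1 − x)) ≥ 2x` turns `G''` into at most `2(k − 1) / (a (a² − S²)) ≤ 0`.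
Concavity gives `G(t) + G(−t) ≤ 2 G(0)`.
-/

open Real

lemma two_mul_le_log_one_add_sub_log_one_sub {x : ℝ} (hx₀ : 0 ≤ x) (hx₁ : x < 1) :
    2 * x ≤ log (1 + x) - log (1 - x) := by
  have hsum := hasSum_log_sub_log_of_abs_lt_one (abs_lt.2 ⟨by linarith, hx₁⟩)
  simpa using le_hasSum hsum 0 fun n _ => by positivity

noncomputable def mulLogGap (k w : ℝ) : ℝ :=
  (1 + w + √(k + 2 * w)) * log (1 + w + √(k + 2 * w)) +
    (1 + w - √(k + 2 * w)) * log (1 + w - √(k + 2 * w)) - 2 * ((1 + w) * log (1 + w))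

noncomputable def mulLogGapDeriv (k w : ℝ) : ℝ :=
  log (1 + w + √(k + 2 * w)) + log (1 + w - √(k + 2 * w)) - 2 * log (1 + w) +
    (log (1 + w + √(k + 2 * w)) - log (1 + w - √(k + 2 * w))) / √(k + 2 * w)

noncomputable def mulLogGapDeriv2 (k w : ℝ) : ℝ :=
  (1 + (√(k + 2 * w))⁻¹) / (1 + w + √(k + 2 * w)) * (1 + (√(k + 2 * w))⁻¹) +
    (1 - (√(k + 2 * w))⁻¹) / (1 + w - √(k + 2 * w)) * (1 - (√(k + 2 * w))⁻¹) - 2 / (1 + w) -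
    (log (1 + w + √(k + 2 * w)) - log (1 + w - √(k + 2 * w))) / √(k + 2 * w) ^ 3

lemma continuous_mulLogGap (k : ℝ) : Continuous (mulLogGap k) := by
  have hA : Continuous fun x : ℝ => 1 + x := by fun_prop
  have hp : Continuous fun x => 1 + x + √(k + 2 * x) := by fun_prop
  have hm : Continuous fun x => 1 + x - √(k + 2 * x) := by fun_prop
  exact (hp.mul_log.add hm.mul_log).sub (hA.mul_log.const_mul 2)

section

variable {k w : ℝ}

lemma sqrt_add_two_mul_lt_one_add (hk : k < 1) (hw : -(k / 2) ≤ w) : √(k + 2 * w) < 1 + w := by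
  rw [sqrt_lt' (by linarith)]
  nlinarith [sq_nonneg w]

lemma hasDerivAt_sqrt_add_two_mul (h : 0 < k + 2 * w) :
    HasDerivAt (fun x => √(k + 2 * x)) (√(k + 2 * w))⁻¹ w := by
  convert (((hasDerivAt_id' w).const_mul 2).const_add k).sqrt h.ne' using 1
  field_simp

lemma hasDerivAt_mulLogGap (hk : k < 1) (hw : -(k / 2) < w) :
    HasDerivAt (mulLogGap k) (mulLogGapDeriv k w) w := by
  have hS : 0 < √(k + 2 * w) := sqrt_pos.2 (by linarith)
  have hmpos : 0 < 1 + w - √(k + 2 * w) := sub_pos.2 (sqrt_add_two_mul_lt_one_add hk hw.le)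
  have hS' := hasDerivAt_sqrt_add_two_mul (k := k) (w := w) (by linarith)
  have hA : HasDerivAt (fun x : ℝ => 1 + x) 1 w := (hasDerivAt_id w).const_add 1
  have hp : HasDerivAt (fun x => 1 + x + √(k + 2 * x)) (1 + (√(k + 2 * w))⁻¹) w := hA.add hS'
  have hm : HasDerivAt (fun x => 1 + x - √(k + 2 * x)) (1 - (√(k + 2 * w))⁻¹) w := hA.sub hS'
  have hP := (hasDerivAt_mul_log (by linarith)).comp w hp
  have hM := (hasDerivAt_mul_log hmpos.ne').comp w hm
  have hA' := (hasDerivAt_mul_log (by linarith)).comp w hA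
  refine ((hP.add hM).sub (hA'.const_mul 2)).congr_deriv ?_
  unfold mulLogGapDeriv
  field_simp
  ring

lemma hasDerivAt_mulLogGapDeriv (hk : k < 1) (hw : -(k / 2) < w) :
    HasDerivAt (mulLogGapDeriv k) (mulLogGapDeriv2 k w) w := by
  have hS : 0 < √(k + 2 * w) := sqrt_pos.2 (by linarith)
  have hmpos : 0 < 1 + w - √(k + 2 * w) := sub_pos.2 (sqrt_add_two_mul_lt_one_add hk hw.le)
  have hS' := hasDerivAt_sqrt_add_two_mul (k := k) (w := w) (by linarith)
  have hA : HasDerivAt (fun x : ℝ => 1 + x) 1 w := (hasDerivAt_id w).const_add 1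
  have hp : HasDerivAt (fun x => 1 + x + √(k + 2 * x)) (1 + (√(k + 2 * w))⁻¹) w := hA.add hS'
  have hm : HasDerivAt (fun x => 1 + x - √(k + 2 * x)) (1 - (√(k + 2 * w))⁻¹) w := hA.sub hS'
  have hP := hp.log (by linarith)
  have hM := hm.log hmpos.ne'
  have hA' := hA.log (by linarith)
  have hD : HasDerivAt (fun x => log (1 + x + √(k + 2 * x)) - log (1 + x - √(k + 2 * x)))
      _ w := hP.sub hM
  refine (((hP.add hM).sub (hA'.const_mul 2)).add (hD.div hS' hS.ne')).congr_deriv ?_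
  unfold mulLogGapDeriv2
  field_simp
  ring

lemma mulLogGapDeriv2_nonpos (hk : k < 1) (hw : -(k / 2) < w) : mulLogGapDeriv2 k w ≤ 0 := by
  have hS : 0 < √(k + 2 * w) := sqrt_pos.2 (by linarith)
  have hSa := sqrt_add_two_mul_lt_one_add hk hw.le
  have hS2 : √(k + 2 * w) ^ 2 = k + 2 * w := sq_sqrt (by linarith)
  unfold mulLogGapDeriv2
  set S := √(k + 2 * w)
  have ha : 0 < 1 + w := by linarith
  have hQ : 0 < (1 + w) ^ 2 - S ^ 2 := by nlinarith
  have hlog : 2 * (S / (1 + w)) ≤ log (1 + w + S) - log (1 + w - S) := by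
    have := two_mul_le_log_one_add_sub_log_one_sub (by positivity) ((div_lt_one ha).2 hSa)
    rwa [one_add_div ha.ne', one_sub_div ha.ne', log_div (by positivity) ha.ne',
      log_div (by linarith) ha.ne', sub_sub_sub_cancel_right] at this
  calc _ ≤ (1 + S⁻¹) / (1 + w + S) * (1 + S⁻¹) + (1 - S⁻¹) / (1 + w - S) * (1 - S⁻¹) -
        2 / (1 + w) - 2 * (S / (1 + w)) / S ^ 3 := by gcongr
    _ = 2 * (S ^ 2 - 2 * w - 1) / ((1 + w) * ((1 + w) ^ 2 - S ^ 2)) := by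
      have : 1 + w - S ≠ 0 := by linarith
      have : (1 + w) ^ 2 - S ^ 2 ≠ 0 := hQ.ne'
      field_simp
      ring
    _ ≤ 0 := div_nonpos_of_nonpos_of_nonneg (by linarith) (by positivity)

lemma concaveOn_mulLogGap (hk : k < 1) : ConcaveOn ℝ (Set.Ici (-(k / 2))) (mulLogGap k) := by
  refine concaveOn_of_hasDerivWithinAt2_nonpos (f' := mulLogGapDeriv k) (f'' := mulLogGapDeriv2 k)
    (convex_Ici _) (continuous_mulLogGap k).continuousOn
    (fun x hx => ?_) (fun x hx => ?_) (fun x hx => ?_) <;> rw [interior_Ici] at hx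
  · exact (hasDerivAt_mulLogGap hk hx).hasDerivWithinAt
  · exact (hasDerivAt_mulLogGapDeriv hk hx).hasDerivWithinAt
  · exact mulLogGapDeriv2_nonpos hk hx

lemma mulLogGap_add_mulLogGap_neg_le (hk : k < 1) {t : ℝ} (ht : |t| ≤ k / 2) :
    mulLogGap k t + mulLogGap k (-t) ≤ 2 * mulLogGap k 0 := by
  rw [abs_le] at ht
  have h := (concaveOn_mulLogGap hk).2 (Set.mem_Ici.2 ht.1)
    (Set.mem_Ici.2 (by linarith : -(k / 2) ≤ -t)) (show (0 : ℝ) ≤ 1 / 2 by norm_num)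
    (show (0 : ℝ) ≤ 1 / 2 by norm_num) (by norm_num)
  simp only [smul_eq_mul] at h
  rw [show 1 / 2 * t + 1 / 2 * -t = 0 by ring] at h
  linarith

end

lemma quarter_mul_logb_div {x a : ℝ} (ha : a ≠ 0) :
    1 / 4 * x * logb 2 (x / a) = (x * log x - x * log a) / (4 * log 2) := by
  rcases eq_or_ne x 0 with rfl | hx
  · simp
  · rw [logb, log_div hx ha]
    ring

lemma F_eq_mulLogGap {r c₃ c z : ℝ} (hcc : c ^ 2 = c₃ ^ 2) (hplus : 1 + r * c₃ * z ≠ 0)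
    (hminus : 1 - r * c₃ * z ≠ 0) :
    F r (r * c₃) c₃ c z =
      (mulLogGap (r ^ 2 + c ^ 2) (r * c₃ * z) + mulLogGap (r ^ 2 + c ^ 2) (-(r * c₃ * z))) /
        (4 * log 2) := by
  have eplus : Hp r c₃ c z = √(r ^ 2 + c ^ 2 + 2 * (r * c₃ * z)) := by
    unfold Hp; congr 1; linear_combination (-z ^ 2) * hcc
  have eminus : Hm r c₃ c z = √(r ^ 2 + c ^ 2 - 2 * (r * c₃ * z)) := by
    unfold Hm; congr 1; linear_combination (-z ^ 2) * hcc
  unfold F mulLogGap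
  simp only [eplus, eminus, quarter_mul_logb_div hplus, quarter_mul_logb_div hminus, mul_neg,
    ← sub_eq_add_neg]
  ring

lemma F_zero (r s c₃ c : ℝ) :
    F r s c₃ c 0 =
      1 / 2 * (1 + √(r ^ 2 + c ^ 2)) * logb 2 (1 + √(r ^ 2 + c ^ 2)) +
        1 / 2 * (1 - √(r ^ 2 + c ^ 2)) * logb 2 (1 - √(r ^ 2 + c ^ 2)) := by
  have eplus : Hp r c₃ c 0 = √(r ^ 2 + c ^ 2) := by unfold Hp; ring_nf
  have eminus : Hm r c₃ c 0 = √(r ^ 2 + c ^ 2) := by unfold Hm; ring_nf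
  simp only [F, eplus, eminus, mul_zero, add_zero, sub_zero, div_one]
  ring

theorem F_max_at_zero_case_d_general (r c₃ c : ℝ)
    (hcc : c^2 = c₃^2) (hbound : c^2 + r^2 ≤ 2/3) :
    (∀ z ∈ Set.Icc (0:ℝ) 1, F r (r * c₃) c₃ c z ≤ F r (r * c₃) c₃ c 0) ∧
    F r (r * c₃) c₃ c 0 =
      (1/2) * (1 + Real.sqrt (r^2 + c^2)) * Real.logb 2 (1 + Real.sqrt (r^2 + c^2)) +
      (1/2) * (1 - Real.sqrt (r^2 + c^2)) * Real.logb 2 (1 - Real.sqrt (r^2 + c^2)) := by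
  refine ⟨fun z hz => ?_, F_zero r (r * c₃) c₃ c⟩
  have hk : r ^ 2 + c ^ 2 < 1 := by linarith
  have hrc : |r * c₃| ≤ (r ^ 2 + c ^ 2) / 2 := by
    rw [abs_le, hcc]
    constructor <;> nlinarith [sq_nonneg (r + c₃), sq_nonneg (r - c₃)]
  have ht : |r * c₃ * z| ≤ (r ^ 2 + c ^ 2) / 2 := by
    rw [abs_mul, abs_of_nonneg hz.1]
    exact (mul_le_of_le_one_right (abs_nonneg _) hz.2).trans hrc
  have hplus : 1 + r * c₃ * z ≠ 0 := by linarith [neg_abs_le (r * c₃ * z)]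
  have hminus : 1 - r * c₃ * z ≠ 0 := by linarith [le_abs_self (r * c₃ * z)]
  rw [F_eq_mulLogGap hcc hplus hminus, F_eq_mulLogGap hcc (by simp) (by simp), mul_zero, neg_zero]
  exact div_le_div_of_nonneg_right (by linarith [mulLogGap_add_mulLogGap_neg_le hk ht])
    (by positivity)

theorem F_max_at_zero_case_d (r c₃ c : ℝ) (hc : 0 ≤ c)
    (hs0 : r * c₃ ≤ 0) (hcc : c^2 = c₃^2) (hbound : c^2 + r^2 ≤ 2/3)
    (hHp : ∀ z ∈ Set.Icc (0:ℝ) 1, Hp r c₃ c z ≤ 1 + (r * c₃)*z)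
    (hHm : ∀ z ∈ Set.Icc (0:ℝ) 1, Hm r c₃ c z ≤ 1 - (r * c₃)*z) :
    (∀ z ∈ Set.Icc (0:ℝ) 1, F r (r * c₃) c₃ c z ≤ F r (r * c₃) c₃ c 0) ∧
    F r (r * c₃) c₃ c 0 =
      (1/2) * (1 + Real.sqrt (r^2 + c^2)) * Real.logb 2 (1 + Real.sqrt (r^2 + c^2)) +
      (1/2) * (1 - Real.sqrt (r^2 + c^2)) * Real.logb 2 (1 - Real.sqrt (r^2 + c^2)) :=
  F_max_at_zero_case_d_general r c₃ c hcc hbound
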